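/- Let E be a strictly convex and reflexive Banach space, C a nonempty closed convex subset of E, and S a semigroup acting on C by self-maps T_s. If a ∈ E is an attractive point of the action (that is, ‖a - T_s x‖ ≤ ‖a - x‖ for all s ∈ S and x ∈ C), then the metric projection P_C(a) is a common fixed point: T_s(P_C(a)) = P_C(a) for all s ∈ S. -/

import Mathlib

/-! Since `a` is attractive, `T s u` is at least as close to `a` as `u`, so it is another nearest
point of `C` to `a`; in a strictly convex space nearest points in a convex set are unique, because
the midpoint of two distinct ones would be strictly closer. -/

theorem StrictConvexSpace.of_norm_midpoint_lt_one {E : Type*} [NormedAddCommGroup E]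
    [NormedSpace ℝ E]
    (h : ∀ x y : E, ‖x‖ = 1 → ‖y‖ = 1 → x ≠ y → ‖(1 / 2 : ℝ) • (x + y)‖ < 1) :
    StrictConvexSpace ℝ E :=
  .of_norm_combo_lt_one fun x y hx hy hne =>
    ⟨1 / 2, 1 / 2, add_halves 1, by simpa only [smul_add] using h x y hx hy hne⟩

theorem Convex.eq_of_isMinOn_norm_sub {E : Type*} [NormedAddCommGroup E] [NormedSpace ℝ E]
    [StrictConvexSpace ℝ E] {C : Set E} (hC : Convex ℝ C) {a x y : E} (hx : x ∈ C) (hy : y ∈ C)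
    (hxmin : IsMinOn (fun c => ‖c - a‖) C x) (hymin : IsMinOn (fun c => ‖c - a‖) C y) :
    x = y := by
  have hnorm : ‖x - a‖ = ‖y - a‖ := le_antisymm (hxmin hy) (hymin hx)
  have hmid : (1 / 2 : ℝ) • x + (1 / 2 : ℝ) • y ∈ C :=
    hC hx hy (by norm_num) (by norm_num) (add_halves 1)
  have hmid_sub : (1 / 2 : ℝ) • x + (1 / 2 : ℝ) • y - a = (1 / 2 : ℝ) • ((x - a) + (y - a)) := by
    module
  by_contra hne
  have hlt : ‖(1 / 2 : ℝ) • ((x - a) + (y - a))‖ < ‖x - a‖ :=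
    (norm_midpoint_lt_iff hnorm).2 (sub_left_injective.ne hne)
  exact (hxmin hmid).not_gt (hmid_sub ▸ hlt)

theorem stmt_3_general {E : Type*} [NormedAddCommGroup E] [NormedSpace ℝ E]
    (hsc : ∀ x y : E, ‖x‖ = 1 → ‖y‖ = 1 → x ≠ y → ‖(1 / 2 : ℝ) • (x + y)‖ < 1)
    (C : Set E) (hCconv : Convex ℝ C)
    {S : Type*} (T : S → E → E)
    (hmaps : ∀ s, Set.MapsTo (T s) C C)
    (a : E) (hatt : ∀ s : S, ∀ x ∈ C, ‖a - T s x‖ ≤ ‖a - x‖)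
    (u : E) (hu : u ∈ C) (hproj : ∀ c ∈ C, ‖u - a‖ ≤ ‖c - a‖) :
    ∀ s : S, T s u = u := by
  have : StrictConvexSpace ℝ E := .of_norm_midpoint_lt_one hsc
  intro s
  have hTu_min : IsMinOn (fun c => ‖c - a‖) C (T s u) := isMinOn_iff.2 fun c hc =>
    calc ‖T s u - a‖ = ‖a - T s u‖ := norm_sub_rev _ _
      _ ≤ ‖a - u‖ := hatt s u hu
      _ = ‖u - a‖ := norm_sub_rev _ _
      _ ≤ ‖c - a‖ := hproj c hc
  exact hCconv.eq_of_isMinOn_norm_sub (hmaps s hu) hu hTu_min hproj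

/-- If `a` is an attractive point of a semigroup representation on a
nonempty closed convex subset `C` of a strictly convex reflexive Banach space, then
the metric projection of `a` onto `C` is a common fixed point. -/
theorem stmt_3 {E : Type*} [NormedAddCommGroup E] [NormedSpace ℝ E] [CompleteSpace E]
    (hrefl : Function.Surjective (NormedSpace.inclusionInDoubleDual ℝ E))
    (hsc : ∀ x y : E, ‖x‖ = 1 → ‖y‖ = 1 → x ≠ y → ‖(1 / 2 : ℝ) • (x + y)‖ < 1)
    (C : Set E) (hCne : C.Nonempty) (hCc : IsClosed C) (hCconv : Convex ℝ C)
    {S : Type*} [Semigroup S] (T : S → E → E)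
    (hmaps : ∀ s, Set.MapsTo (T s) C C)
    (hrep : ∀ s t : S, ∀ x ∈ C, T (s * t) x = T s (T t x))
    (a : E) (hatt : ∀ s : S, ∀ x ∈ C, ‖a - T s x‖ ≤ ‖a - x‖)
    (u : E) (hu : u ∈ C) (hproj : ∀ c ∈ C, ‖u - a‖ ≤ ‖c - a‖) :
    ∀ s : S, T s u = u :=
  stmt_3_general hsc C hCconv T hmaps a hatt u hu hproj
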